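/- arXiv:1908.08777 — 3 statements merged into one kernel-verified Lean document; each statement's English description precedes it below -/
import Mathlib

section
/- For any continuously differentiable β, ξ : [0,T] → ℝ, the real function x ↦ ∫₀ᵀ (β_t + x ξ_t) · γ_t(β + x ξ) dt is differentiable at x = 0 and its derivative there equals ∫₀ᵀ ( γ_t(β) − (2β_t/σ_t²)·∫_t^T γ_s(β)² β_s ds ) ξ_t dt. -/
open MeasureTheory intervalIntegral

/-- Mean-square filtering error `γ_t(β) = σ_v² / (1 + σ_v² ∫₀ᵗ (β_s/σ_s)² ds)`. -/
noncomputable def gammaFn (σv : ℝ) (σ β : ℝ → ℝ) (t : ℝ) : ℝ :=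
  σv ^ 2 / (1 + σv ^ 2 * ∫ s in (0:ℝ)..t, (β s / σ s) ^ 2)

/-!
For fixed `t`, `γ_t(β + xξ)` is `σ_v²` divided by `1 + σ_v² q_t(x)`, where
`q_t(x) = ∫₀ᵗ ((β + xξ)/σ)²` is a quadratic polynomial in `x` whose coefficients are primitives of
continuous functions. Hence `∂ₓ γ_t(β + xξ) = -2 γ_t(β + xξ)² ∫₀ᵗ (β + xξ) ξ / σ²` is jointly
continuous in `(x, t)`, so bounded on compacts, and one may differentiate under the integral sign. At `x = 0` this gives
`∫₀ᵀ (ξ_t γ_t - 2 β_t γ_t² ∫₀ᵗ β ξ / σ²) dt`, and an integration by parts,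
`∫₀ᵀ (∫₀ᵗ f) g = ∫₀ᵀ f (∫ₜᵀ g)`, moves the inner integral onto `γ² β`.
-/

open Set Metric Function
open scoped Interval Topology

theorem hasDerivAt_integral_of_continuousOn_deriv {F G : ℝ → ℝ → ℝ} {a b x₀ : ℝ} {s : Set ℝ}
    (hs : s ∈ 𝓝 x₀) (hsc : IsCompact s) (hF : ∀ x ∈ s, ContinuousOn (F x) [[a, b]])
    (hG : ContinuousOn (uncurry G) (s ×ˢ [[a, b]]))
    (hFG : ∀ x ∈ s, ∀ t ∈ [[a, b]], HasDerivAt (F · t) (G x t) x) :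
    HasDerivAt (fun x => ∫ t in a..b, F x t) (∫ t in a..b, G x₀ t) x₀ := by
  obtain ⟨K, hK⟩ := (hsc.prod isCompact_uIcc).exists_bound_of_continuousOn hG
  have hx₀ : x₀ ∈ s := mem_of_mem_nhds hs
  refine (hasDerivAt_integral_of_dominated_loc_of_deriv_le (bound := fun _ => K) hs
    (Filter.eventually_of_mem hs fun x hx =>
      ((hF x hx).mono uIoc_subset_uIcc).aestronglyMeasurable measurableSet_uIoc)
    (hF x₀ hx₀).intervalIntegrable ?_ ?_ intervalIntegrable_const ?_).2
  · exact ((hG.comp (continuousOn_const.prodMk continuousOn_id) fun t ht => ⟨hx₀, ht⟩).mono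
      uIoc_subset_uIcc).aestronglyMeasurable measurableSet_uIoc
  · exact ae_of_all _ fun t ht x hx => hK (x, t) ⟨hx, uIoc_subset_uIcc ht⟩
  · exact ae_of_all _ fun t ht x hx => hFG x hx t (uIoc_subset_uIcc ht)

theorem integral_add_mul_sq {u v : ℝ → ℝ} {a b : ℝ} (hu : ContinuousOn u [[a, b]])
    (hv : ContinuousOn v [[a, b]]) (x : ℝ) :
    ∫ s in a..b, (u s + x * v s) ^ 2
      = (∫ s in a..b, u s ^ 2) + 2 * x * (∫ s in a..b, u s * v s)
          + x ^ 2 * ∫ s in a..b, v s ^ 2 := by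
  have hu2 : IntervalIntegrable (fun s => u s ^ 2) volume a b := (hu.pow 2).intervalIntegrable
  have huv : IntervalIntegrable (fun s => u s * v s) volume a b := (hu.mul hv).intervalIntegrable
  have hv2 : IntervalIntegrable (fun s => v s ^ 2) volume a b := (hv.pow 2).intervalIntegrable
  calc ∫ s in a..b, (u s + x * v s) ^ 2
      = ∫ s in a..b, (u s ^ 2 + 2 * x * (u s * v s)) + x ^ 2 * v s ^ 2 :=
        integral_congr fun s _ => by ring
    _ = _ := by
      rw [integral_add (hu2.add (huv.const_mul _)) (hv2.const_mul _),
        integral_add hu2 (huv.const_mul _), intervalIntegral.integral_const_mul,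
        intervalIntegral.integral_const_mul]

theorem integral_integral_mul_eq_integral_mul_integral {f g : ℝ → ℝ} {a b : ℝ}
    (hf : ContinuousOn f [[a, b]]) (hg : ContinuousOn g [[a, b]]) :
    ∫ t in a..b, (∫ s in a..t, f s) * g t = ∫ t in a..b, f t * ∫ s in t..b, g s := by
  have hderiv : ∀ {h : ℝ → ℝ} {c : ℝ}, ContinuousOn h [[a, b]] → c ∈ [[a, b]] →
      ∀ t ∈ Ioo (min a b) (max a b), HasDerivAt (fun u => ∫ s in c..u, h s) (h t) t := by
    intro h c hh hc t ht
    exact integral_hasDerivAt_right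
      (hh.mono (uIcc_subset_uIcc hc (Ioo_subset_Icc_self ht))).intervalIntegrable
      ((hh.mono Ioo_subset_Icc_self).stronglyMeasurableAtFilter isOpen_Ioo t ht)
      (hh.continuousAt (Icc_mem_nhds ht.1 ht.2))
  have hibp := integral_mul_deriv_eq_deriv_mul_of_hasDerivAt
    (continuousOn_primitive_interval' hf.intervalIntegrable left_mem_uIcc)
    (continuousOn_primitive_interval' hg.intervalIntegrable right_mem_uIcc)
    (hderiv hf left_mem_uIcc) (hderiv hg right_mem_uIcc) hf.intervalIntegrable
    hg.intervalIntegrable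
  simp only [integral_same, zero_mul, mul_zero, sub_zero, zero_sub] at hibp
  rw [hibp, ← intervalIntegral.integral_neg]
  simp only [integral_symm b, mul_neg]

section gammaFn

variable {σv t T : ℝ} {σ β ξ : ℝ → ℝ}

theorem gammaFn_denom_pos (ht : 0 ≤ t) : 0 < 1 + σv ^ 2 * ∫ s in (0:ℝ)..t, (β s / σ s) ^ 2 := by
  have := integral_nonneg (μ := volume) ht fun s _ => sq_nonneg (β s / σ s)
  positivity

theorem integral_add_mul_div_sq (hβ : ContinuousOn (β / σ) [[0, t]])
    (hξ : ContinuousOn (ξ / σ) [[0, t]]) (x : ℝ) :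
    ∫ s in (0:ℝ)..t, ((β s + x * ξ s) / σ s) ^ 2
      = (∫ s in (0:ℝ)..t, (β s / σ s) ^ 2) + 2 * x * (∫ s in (0:ℝ)..t, β s / σ s * (ξ s / σ s))
          + x ^ 2 * ∫ s in (0:ℝ)..t, (ξ s / σ s) ^ 2 := by
  simpa only [Pi.div_apply, add_div, mul_div_assoc] using integral_add_mul_sq hβ hξ x

theorem hasDerivAt_integral_add_mul_div_sq (hβ : ContinuousOn (β / σ) [[0, t]])
    (hξ : ContinuousOn (ξ / σ) [[0, t]]) (x : ℝ) :
    HasDerivAt (fun y => ∫ s in (0:ℝ)..t, ((β s + y * ξ s) / σ s) ^ 2)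
      (2 * ((∫ s in (0:ℝ)..t, β s / σ s * (ξ s / σ s)) + x * ∫ s in (0:ℝ)..t, (ξ s / σ s) ^ 2))
      x := by
  simp only [integral_add_mul_div_sq hβ hξ]
  refine ((((hasDerivAt_id' x).const_mul 2).mul_const _).const_add _).add
    ((hasDerivAt_pow 2 x).mul_const _) |>.congr_deriv ?_
  push_cast
  ring

theorem continuousOn_integral_add_mul_div_sq (hT : 0 ≤ T) (hβ : ContinuousOn (β / σ) (Icc 0 T))
    (hξ : ContinuousOn (ξ / σ) (Icc 0 T)) :
    ContinuousOn (fun p : ℝ × ℝ => ∫ s in (0:ℝ)..p.2, ((β s + p.1 * ξ s) / σ s) ^ 2)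
      (univ ×ˢ Icc 0 T) := by
  rw [← uIcc_of_le hT] at hβ hξ
  have hsub : ∀ p : ℝ × ℝ, p ∈ univ ×ˢ [[0, T]] → [[0, p.2]] ⊆ [[0, T]] :=
    fun p hp => uIcc_subset_uIcc_left hp.2
  have hprim : ∀ {f : ℝ → ℝ}, ContinuousOn f [[0, T]] →
      ContinuousOn (fun p : ℝ × ℝ => ∫ s in (0:ℝ)..p.2, f s) (univ ×ˢ [[0, T]]) :=
    fun hf => (continuousOn_primitive_interval hf.integrableOn_uIcc).comp continuousOn_snd
      fun p hp => hp.2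
  rw [← uIcc_of_le hT]
  refine ContinuousOn.congr ?_ fun p hp =>
    integral_add_mul_div_sq (hβ.mono (hsub p hp)) (hξ.mono (hsub p hp)) p.1
  exact (hprim (hβ.pow 2)).add ((continuousOn_const.mul continuousOn_fst).mul
    (hprim (hβ.mul hξ))) |>.add ((continuousOn_fst.pow 2).mul (hprim (hξ.pow 2)))

theorem continuousOn_gammaFn_add_mul (hT : 0 ≤ T) (hβ : ContinuousOn (β / σ) (Icc 0 T))
    (hξ : ContinuousOn (ξ / σ) (Icc 0 T)) :
    ContinuousOn (fun p : ℝ × ℝ => gammaFn σv σ (fun s => β s + p.1 * ξ s) p.2)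
      (univ ×ˢ Icc 0 T) :=
  continuousOn_const.div
    (continuousOn_const.add
      (continuousOn_const.mul (continuousOn_integral_add_mul_div_sq hT hβ hξ)))
    fun _ hp => (gammaFn_denom_pos hp.2.1).ne'

theorem continuousOn_gammaFn (hT : 0 ≤ T) (hβ : ContinuousOn (β / σ) (Icc 0 T)) :
    ContinuousOn (gammaFn σv σ β) (Icc 0 T) := by
  rw [← uIcc_of_le hT] at hβ ⊢
  exact continuousOn_const.div (continuousOn_const.add (continuousOn_const.mul
    (continuousOn_primitive_interval (hβ.pow 2).integrableOn_uIcc)))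
    fun t ht => (gammaFn_denom_pos (uIcc_of_le hT ▸ ht).1).ne'

theorem hasDerivAt_gammaFn_add_mul (ht : 0 ≤ t) (hβ : ContinuousOn (β / σ) [[0, t]])
    (hξ : ContinuousOn (ξ / σ) [[0, t]]) (x : ℝ) :
    HasDerivAt (fun y => gammaFn σv σ (fun s => β s + y * ξ s) t)
      (-(2 * gammaFn σv σ (fun s => β s + x * ξ s) t ^ 2
        * ((∫ s in (0:ℝ)..t, β s / σ s * (ξ s / σ s)) + x * ∫ s in (0:ℝ)..t, (ξ s / σ s) ^ 2)))
      x := by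
  refine (hasDerivAt_const x (σv ^ 2)).div
    (((hasDerivAt_integral_add_mul_div_sq hβ hξ x).const_mul (σv ^ 2)).const_add 1)
    (gammaFn_denom_pos ht).ne' |>.congr_deriv ?_
  have hD := (gammaFn_denom_pos (σv := σv) (σ := σ) (β := fun s => β s + x * ξ s) ht).ne'
  simp only [gammaFn]
  field_simp
  ring

theorem hasDerivAt_integral_mul_gammaFn_add_mul (hT : 0 ≤ T) (hβ : ContinuousOn β (Icc 0 T))
    (hξ : ContinuousOn ξ (Icc 0 T)) (hβσ : ContinuousOn (β / σ) (Icc 0 T))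
    (hξσ : ContinuousOn (ξ / σ) (Icc 0 T)) :
    HasDerivAt
      (fun x => ∫ t in (0:ℝ)..T, (β t + x * ξ t) * gammaFn σv σ (fun s => β s + x * ξ s) t)
      (∫ t in (0:ℝ)..T, (ξ t * gammaFn σv σ β t
        - 2 * ((∫ s in (0:ℝ)..t, β s / σ s * (ξ s / σ s)) * (gammaFn σv σ β t ^ 2 * β t)))) 0 := by
  have hγ := continuousOn_gammaFn_add_mul (σv := σv) hT hβσ hξσ
  rw [← uIcc_of_le hT] at hβ hξ hβσ hξσ hγ
  have hB : ContinuousOn (fun t => ∫ s in (0:ℝ)..t, β s / σ s * (ξ s / σ s)) [[0, T]] :=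
    continuousOn_primitive_interval (hβσ.mul hξσ).integrableOn_uIcc
  have hC : ContinuousOn (fun t => ∫ s in (0:ℝ)..t, (ξ s / σ s) ^ 2) [[0, T]] :=
    continuousOn_primitive_interval (hξσ.pow 2).integrableOn_uIcc
  have hsub : ∀ t ∈ [[0, T]], 0 ≤ t ∧ [[0, t]] ⊆ [[0, T]] :=
    fun t ht => ⟨(uIcc_of_le hT ▸ ht).1, uIcc_subset_uIcc_left ht⟩
  have hsnd : ∀ {f : ℝ → ℝ}, ContinuousOn f [[0, T]] →
      ContinuousOn (fun p : ℝ × ℝ => f p.2) (univ ×ˢ [[0, T]]) :=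
    fun hf => hf.comp continuousOn_snd fun _ hp => hp.2
  refine (hasDerivAt_integral_of_continuousOn_deriv (closedBall_mem_nhds 0 one_pos)
    (isCompact_closedBall 0 1) (G := fun x t => ξ t * gammaFn σv σ (fun s => β s + x * ξ s) t
      + (β t + x * ξ t) * -(2 * gammaFn σv σ (fun s => β s + x * ξ s) t ^ 2
        * ((∫ s in (0:ℝ)..t, β s / σ s * (ξ s / σ s)) + x * ∫ s in (0:ℝ)..t, (ξ s / σ s) ^ 2)))
    ?_ ?_ ?_).congr_deriv ?_
  · intro x _
    have hγx := hγ.comp (Continuous.prodMk_right x).continuousOn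
      (fun _ ht => ⟨trivial, ht⟩ : MapsTo (fun t => (x, t)) [[0, T]] (univ ×ˢ [[0, T]]))
    exact (hβ.add (continuousOn_const.mul hξ)).mul hγx
  · refine ContinuousOn.mono ?_ (prod_mono (subset_univ _) subset_rfl)
    exact ((hsnd hξ).mul hγ).add (((hsnd hβ).add (continuousOn_fst.mul (hsnd hξ))).mul
      (((continuousOn_const (c := (2:ℝ))).mul (hγ.pow 2)).mul
        ((hsnd hB).add (continuousOn_fst.mul (hsnd hC)))).neg)
  · intro x _ t ht
    exact ((hasDerivAt_id' x).mul_const (ξ t)).const_add (β t) |>.mul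
      (hasDerivAt_gammaFn_add_mul (hsub t ht).1 (hβσ.mono (hsub t ht).2) (hξσ.mono (hsub t ht).2) x)
      |>.congr_deriv (by ring)
  · refine integral_congr fun t _ => ?_
    simp only [zero_mul, add_zero]
    ring

theorem integral_mul_gammaFn_sub_eq (hT : 0 ≤ T) (hβ : ContinuousOn β (Icc 0 T))
    (hξ : ContinuousOn ξ (Icc 0 T)) (hβσ : ContinuousOn (β / σ) (Icc 0 T))
    (hξσ : ContinuousOn (ξ / σ) (Icc 0 T)) :
    ∫ t in (0:ℝ)..T, (ξ t * gammaFn σv σ β t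
        - 2 * ((∫ s in (0:ℝ)..t, β s / σ s * (ξ s / σ s)) * (gammaFn σv σ β t ^ 2 * β t)))
      = ∫ t in (0:ℝ)..T, (gammaFn σv σ β t
          - (2 * β t / (σ t) ^ 2) * ∫ s in t..T, (gammaFn σv σ β s) ^ 2 * β s) * ξ t := by
  have hγ := continuousOn_gammaFn (σv := σv) hT hβσ
  rw [← uIcc_of_le hT] at hβ hξ hβσ hξσ hγ
  have hf : ContinuousOn (fun s => β s / σ s * (ξ s / σ s)) [[0, T]] := hβσ.mul hξσ
  have hg : ContinuousOn (fun s => gammaFn σv σ β s ^ 2 * β s) [[0, T]] := (hγ.pow 2).mul hβ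
  have hξγ : IntervalIntegrable (fun t => ξ t * gammaFn σv σ β t) volume 0 T :=
    (hξ.mul hγ).intervalIntegrable
  have hBg : IntervalIntegrable
      (fun t => 2 * ((∫ s in (0:ℝ)..t, β s / σ s * (ξ s / σ s)) * (gammaFn σv σ β t ^ 2 * β t)))
      volume 0 T :=
    ((continuousOn_primitive_interval hf.integrableOn_uIcc).mul hg).intervalIntegrable.const_mul 2
  have hfV : IntervalIntegrable
      (fun t => 2 * (β t / σ t * (ξ t / σ t) * ∫ s in t..T, gammaFn σv σ β s ^ 2 * β s))
      volume 0 T :=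
    (hf.mul (continuousOn_primitive_interval_left hg.integrableOn_uIcc)).intervalIntegrable
      |>.const_mul 2
  rw [integral_sub hξγ hBg, intervalIntegral.integral_const_mul,
    integral_integral_mul_eq_integral_mul_integral hf hg, ← intervalIntegral.integral_const_mul,
    ← integral_sub hξγ hfV]
  exact integral_congr fun t _ => by ring

end gammaFn

theorem gateaux_derivative_gamma_part_general
    (T σv : ℝ) (hT : 0 < T)
    (σ : ℝ → ℝ) (hσc : ContinuousOn σ (Set.Icc 0 T))
    (hσpos : ∀ t ∈ Set.Icc (0:ℝ) T, 0 < σ t)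
    (β ξ : ℝ → ℝ) (hβ : ContDiffOn ℝ 1 β (Set.Icc 0 T))
    (hξ : ContDiffOn ℝ 1 ξ (Set.Icc 0 T)) :
    HasDerivAt
      (fun x : ℝ => ∫ t in (0:ℝ)..T,
        (β t + x * ξ t) * gammaFn σv σ (fun s => β s + x * ξ s) t)
      (∫ t in (0:ℝ)..T,
        (gammaFn σv σ β t
          - (2 * β t / (σ t) ^ 2) * ∫ s in t..T, (gammaFn σv σ β s) ^ 2 * β s) * ξ t)
      0 := by
  have hσ0 : ∀ t ∈ Icc 0 T, σ t ≠ 0 := fun t ht => (hσpos t ht).ne'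
  have hβσ := hβ.continuousOn.div hσc hσ0
  have hξσ := hξ.continuousOn.div hσc hσ0
  rw [← integral_mul_gammaFn_sub_eq hT.le hβ.continuousOn hξ.continuousOn hβσ hξσ]
  exact hasDerivAt_integral_mul_gammaFn_add_mul hT.le hβ.continuousOn hξ.continuousOn hβσ hξσ

/-- the Gateaux derivative of `x ↦ ∫₀ᵀ (β_t + x ξ_t) γ_t(β + xξ) dt`
at `x = 0` equals `∫₀ᵀ ( γ_t(β) − (2β_t/σ_t²)·∫_t^T γ_s(β)² β_s ds ) ξ_t dt`. -/
theorem gateaux_derivative_gamma_part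
    (T σv : ℝ) (hT : 0 < T) (hσv : 0 < σv)
    (σ : ℝ → ℝ) (hσc : ContinuousOn σ (Set.Icc 0 T))
    (hσpos : ∀ t ∈ Set.Icc (0:ℝ) T, 0 < σ t)
    (β ξ : ℝ → ℝ) (hβ : ContDiffOn ℝ 1 β (Set.Icc 0 T))
    (hξ : ContDiffOn ℝ 1 ξ (Set.Icc 0 T)) :
    HasDerivAt
      (fun x : ℝ => ∫ t in (0:ℝ)..T,
        (β t + x * ξ t) * gammaFn σv σ (fun s => β s + x * ξ s) t)
      (∫ t in (0:ℝ)..T,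
        (gammaFn σv σ β t
          - (2 * β t / (σ t) ^ 2) * ∫ s in t..T, (gammaFn σv σ β s) ^ 2 * β s) * ξ t)
      0 :=
  gateaux_derivative_gamma_part_general T σv hT σ hσc hσpos β ξ hβ hξ
end

section
/- For every t ∈ [0,T), the function β⁰ satisfies the zero-fee first-order condition: 2·β⁰_t·∫_t^T γ_s(β⁰)² β⁰_s ds = σ_t² · γ_t(β⁰). In other words, the explicit trading intensity β⁰_t = σ_t² (∫₀ᵀ σ_s² ds)^{1/2} / (σ_v ∫_t^T σ_s² ds) solves the integral equation β_t = σ_t² γ_t(β) / (2 ∫_t^T γ_s(β)² β_s ds) that characterizes the insider's optimal trading intensity when κ = 0. -/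
open MeasureTheory intervalIntegral

/-- The explicit zero-fee trading intensity
`β⁰_t = σ_t² (∫₀ᵀ σ_s² ds)^{1/2} / (σ_v ∫_t^T σ_s² ds)`. -/
noncomputable def beta0 (T σv : ℝ) (σ : ℝ → ℝ) (t : ℝ) : ℝ :=
  (σ t) ^ 2 * Real.sqrt (∫ s in (0:ℝ)..T, (σ s) ^ 2) / (σv * ∫ s in t..T, (σ s) ^ 2)

/-- the explicit trading intensity `β⁰` satisfies the zero-fee
first-order condition `2 β⁰_t ∫_t^T γ_s(β⁰)² β⁰_s ds = σ_t² γ_t(β⁰)` on `[0,T)`. -/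
theorem beta0_solves_zero_fee_integral_equation
    (T σv : ℝ) (hT : 0 < T) (hσv : 0 < σv)
    (σ : ℝ → ℝ) (hσc : ContinuousOn σ (Set.Icc 0 T))
    (hσpos : ∀ t ∈ Set.Icc (0:ℝ) T, 0 < σ t) :
    ∀ t ∈ Set.Ico (0:ℝ) T,
      2 * beta0 T σv σ t *
          ∫ s in t..T, (gammaFn σv σ (beta0 T σv σ) s) ^ 2 * beta0 T σv σ s =
        (σ t) ^ 2 * gammaFn σv σ (beta0 T σv σ) t := by
  intro t ht
  obtain ⟨ht0, htT⟩ := ht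
  have htmem : t ∈ Set.Icc (0:ℝ) T := ⟨ht0, htT.le⟩
  set S : ℝ → ℝ := fun u => ∫ s in u..T, (σ s) ^ 2 with hSdef
  set A : ℝ := ∫ s in (0:ℝ)..T, (σ s) ^ 2 with hAdef
  have hσ2c : ContinuousOn (fun s => (σ s) ^ 2) (Set.Icc 0 T) := hσc.pow 2
  have huIcc : Set.uIcc (0:ℝ) T = Set.Icc 0 T := Set.uIcc_of_le hT.le
  -- interval integrability of σ² on subintervals of [0,T]
  have hInt : ∀ a b : ℝ, a ∈ Set.Icc (0:ℝ) T → b ∈ Set.Icc (0:ℝ) T →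
      IntervalIntegrable (fun s => (σ s) ^ 2) volume a b := by
    intro a b ha hb
    apply ContinuousOn.intervalIntegrable
    apply hσ2c.mono
    rw [← huIcc] at ha hb ⊢
    exact Set.uIcc_subset_uIcc ha hb
  -- continuity of S on [0,T]
  have hScont : ContinuousOn S (Set.Icc 0 T) := by
    have := continuousOn_primitive_interval_left
      (f := fun s => (σ s) ^ 2) (a := (0:ℝ)) (b := T) (μ := volume)
      (by rw [huIcc]; exact hσ2c.integrableOn_Icc)
    rwa [huIcc] at this
  -- positivity of S on [0,T)
  have hSpos : ∀ u ∈ Set.Ico (0:ℝ) T, 0 < S u := by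
    intro u hu
    refine intervalIntegral_pos_of_pos_on (hInt u T ⟨hu.1, hu.2.le⟩ ⟨hT.le, le_rfl⟩) ?_ hu.2
    intro x hx
    exact pow_pos (hσpos x ⟨hu.1.trans hx.1.le, hx.2.le⟩) 2
  have hApos : 0 < A := hSpos 0 ⟨le_rfl, hT⟩
  -- S u = A - ∫₀ᵘ σ² on [0,T]
  have hSsplit : ∀ u ∈ Set.Icc (0:ℝ) T, S u = A - ∫ s in (0:ℝ)..u, (σ s) ^ 2 := by
    intro u hu
    have := integral_add_adjacent_intervals (f := fun s => (σ s) ^ 2) (μ := volume)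
      (hInt 0 u ⟨le_rfl, hT.le⟩ hu) (hInt u T hu ⟨hT.le, le_rfl⟩)
    simp only [← hAdef] at this
    simp only [hSdef]
    linarith
  -- derivative of S
  have hSderiv : ∀ s ∈ Set.Ioo (0:ℝ) T, HasDerivAt S (-(σ s) ^ 2) s := by
    intro s hs
    have hnhds : Set.Icc (0:ℝ) T ∈ nhds s := Icc_mem_nhds hs.1 hs.2
    have hca : ContinuousAt (fun s => (σ s) ^ 2) s := hσ2c.continuousAt hnhds
    have hmeas : StronglyMeasurableAtFilter (fun s => (σ s) ^ 2) (nhds s) volume :=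
      ContinuousOn.stronglyMeasurableAtFilter isOpen_Ioo
        (hσ2c.mono Set.Ioo_subset_Icc_self) s hs
    have hG : HasDerivAt (fun u => ∫ x in (0:ℝ)..u, (σ x) ^ 2) ((σ s) ^ 2) s :=
      integral_hasDerivAt_right (hInt 0 s ⟨le_rfl, hT.le⟩ ⟨hs.1.le, hs.2.le⟩) hmeas hca
    have h2 : HasDerivAt (fun u => A - ∫ x in (0:ℝ)..u, (σ x) ^ 2) (-(σ s) ^ 2) s := by
      exact ((hasDerivAt_const s A).sub hG).congr_deriv (by ring)
    refine h2.congr_of_eventuallyEq ?_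
    filter_upwards [hnhds] with u hu
    exact hSsplit u hu
  have hS0 : S 0 = A := rfl
  have hST : S T = 0 := integral_same
  have hbeta : ∀ u, beta0 T σv σ u = (σ u) ^ 2 * Real.sqrt A / (σv * S u) := fun u => rfl
  -- the gamma formula on [0,T)
  have hgamma : ∀ u ∈ Set.Ico (0:ℝ) T,
      gammaFn σv σ (beta0 T σv σ) u = σv ^ 2 * S u / A := by
    intro u hu
    have huI : u ∈ Set.Icc (0:ℝ) T := ⟨hu.1, hu.2.le⟩
    have hsub : Set.Icc (0:ℝ) u ⊆ Set.Icc (0:ℝ) T :=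
      Set.Icc_subset_Icc le_rfl hu.2.le
    have hSne : ∀ s ∈ Set.Icc (0:ℝ) u, S s ≠ 0 := fun s hs =>
      (hSpos s ⟨hs.1, lt_of_le_of_lt hs.2 hu.2⟩).ne'
    -- the integrand rewritten
    have hEq : Set.EqOn (fun s => (beta0 T σv σ s / σ s) ^ 2)
        (fun s => A / σv ^ 2 * ((σ s) ^ 2 / (S s) ^ 2)) (Set.Icc 0 u) := by
      intro s hs
      have hσne : σ s ≠ 0 := (hσpos s (hsub hs)).ne'
      have hSne' : S s ≠ 0 := hSne s hs
      have hsq : Real.sqrt A ^ 2 = A := Real.sq_sqrt hApos.le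
      have h1 : beta0 T σv σ s / σ s = σ s * Real.sqrt A / (σv * S s) := by
        rw [hbeta]; field_simp
      show (beta0 T σv σ s / σ s) ^ 2 = A / σv ^ 2 * ((σ s) ^ 2 / (S s) ^ 2)
      rw [h1, div_pow, mul_pow, mul_pow, hsq]
      field_simp
    have hFcont : ContinuousOn (fun s => A / σv ^ 2 * (S s)⁻¹) (Set.Icc 0 u) :=
      continuousOn_const.mul ((hScont.mono hsub).inv₀ hSne)
    have hFderiv : ∀ s ∈ Set.Ioo (0:ℝ) u,
        HasDerivAt (fun s => A / σv ^ 2 * (S s)⁻¹)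
          (A / σv ^ 2 * ((σ s) ^ 2 / (S s) ^ 2)) s := by
      intro s hs
      have hs' : s ∈ Set.Ioo (0:ℝ) T := ⟨hs.1, hs.2.trans hu.2⟩
      have := ((hSderiv s hs').inv (hSne s ⟨hs.1.le, hs.2.le⟩)).const_mul (A / σv ^ 2)
      exact this.congr_deriv (by ring)
    have hIntg : IntervalIntegrable (fun s => A / σv ^ 2 * ((σ s) ^ 2 / (S s) ^ 2))
        volume 0 u := by
      apply ContinuousOn.intervalIntegrable
      rw [Set.uIcc_of_le hu.1]
      exact continuousOn_const.mul (((hσ2c.mono hsub).div ((hScont.mono hsub).pow 2))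
        (fun s hs => pow_ne_zero 2 (hSne s hs)))
    have hval : (∫ s in (0:ℝ)..u, (beta0 T σv σ s / σ s) ^ 2)
        = A / σv ^ 2 * (S u)⁻¹ - A / σv ^ 2 * (S 0)⁻¹ := by
      rw [integral_congr (by rwa [Set.uIcc_of_le hu.1])]
      exact integral_eq_sub_of_hasDeriv_right_of_le hu.1 hFcont
        (fun s hs => (hFderiv s hs).hasDerivWithinAt) hIntg
    have hSu : S u ≠ 0 := (hSpos u hu).ne'
    rw [gammaFn, hval, hS0]
    rw [show (1 : ℝ) + σv ^ 2 * (A / σv ^ 2 * (S u)⁻¹ - A / σv ^ 2 * A⁻¹) = A / S u by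
      field_simp; ring]
    rw [div_div_eq_mul_div]
  -- the inner integral
  have hgammaS : gammaFn σv σ (beta0 T σv σ) t = σv ^ 2 * S t / A := hgamma t ⟨ht0, htT⟩
  set r : ℝ := Real.sqrt A with hrdef
  have hrpos : 0 < r := Real.sqrt_pos.mpr hApos
  have hr2 : r ^ 2 = A := Real.sq_sqrt hApos.le
  set c : ℝ := σv ^ 3 / r ^ 3 with hcdef
  have hsubT : Set.Icc t T ⊆ Set.Icc (0:ℝ) T := Set.Icc_subset_Icc ht0 le_rfl
  have hEqg : Set.EqOn (fun s => (gammaFn σv σ (beta0 T σv σ) s) ^ 2 * beta0 T σv σ s)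
      (fun s => c * ((σ s) ^ 2 * S s)) (Set.Icc t T) := by
    intro s hs
    rcases eq_or_lt_of_le hs.2 with hsT | hsT
    · subst hsT
      simp [hbeta, hST]
    · have hs' : s ∈ Set.Ico (0:ℝ) T := ⟨ht0.trans hs.1, hsT⟩
      have hSs : S s ≠ 0 := (hSpos s hs').ne'
      simp only [hgamma s hs', hbeta, hcdef]
      have hA : A = r ^ 2 := hr2.symm
      rw [hA]
      field_simp
  have hσ2S : (∫ s in t..T, (σ s) ^ 2 * S s) = (S t) ^ 2 / 2 := by
    have hFcont : ContinuousOn (fun s => -((S s) ^ 2 / 2)) (Set.Icc t T) :=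
      (((hScont.mono hsubT).pow 2).div_const 2).neg
    have hFderiv : ∀ s ∈ Set.Ioo t T,
        HasDerivAt (fun s => -((S s) ^ 2 / 2)) ((σ s) ^ 2 * S s) s := by
      intro s hs
      have hs' : s ∈ Set.Ioo (0:ℝ) T := ⟨lt_of_le_of_lt ht0 hs.1, hs.2⟩
      have := (((hSderiv s hs').pow 2).div_const 2).neg
      exact this.congr_deriv (by ring)
    have hIntg : IntervalIntegrable (fun s => (σ s) ^ 2 * S s) volume t T := by
      apply ContinuousOn.intervalIntegrable
      rw [Set.uIcc_of_le htT.le]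
      exact (hσ2c.mono hsubT).mul (hScont.mono hsubT)
    have := integral_eq_sub_of_hasDeriv_right_of_le htT.le hFcont
      (fun s hs => (hFderiv s hs).hasDerivWithinAt) hIntg
    rw [this, hST]
    ring
  have hI : (∫ s in t..T, (gammaFn σv σ (beta0 T σv σ) s) ^ 2 * beta0 T σv σ s)
      = c * ((S t) ^ 2 / 2) := by
    rw [integral_congr (by rwa [Set.uIcc_of_le htT.le]), intervalIntegral.integral_const_mul, hσ2S]
  rw [hI, hgammaS, hbeta t]
  have hSt : S t ≠ 0 := (hSpos t ⟨ht0, htT⟩).ne'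
  have hA : A = r ^ 2 := hr2.symm
  rw [hA, hcdef, hrdef]
  rw [← hrdef, ← hA]
  rw [hA]
  field_simp
end

section
/- Fix real numbers t < T, y, m, v, γ, σ > 0, q₁, q₂, p₁, p₂, p₃, and β ≥ 0, and define the market maker's Hamiltonian as a function of κ ∈ ℝ by H^M(κ) = −κ(T−t)·y·(v − m − κ(T−t)y)·β + κ·y² + (v − m − κ(T−t)y)·β·p₁ + σ·q₁ + (γβ/σ²)·(v−m)·β·p₂ + (γβ/σ)·q₂ − (β²γ²/σ²)·p₃. Then H^M is a convex function of κ on ℝ, and consequently, for every K ≥ 0, the maximum of H^M over the interval [0,K] is attained at κ = 0 or at κ = K. (This is the κ-component of the Nash-equilibrium characterization: in any equilibrium κ* = 0 or κ* = K.) -/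
/-!
After expanding, `H^M` is a quadratic polynomial in `κ` whose leading coefficient
`(T - t)² y² β` is nonnegative, so it is convex. A convex function on a segment is bounded by
the larger of its two endpoint values, so its maximum over `[0, K]` sits at `0` or at `K`.
-/

/-- The market maker's Hamiltonian as a function of the fee parameter `κ`. -/
noncomputable def HM (t T y m v γ σ q₁ q₂ p₁ p₂ p₃ β κ : ℝ) : ℝ :=
  -κ * (T - t) * y * (v - m - κ * (T - t) * y) * β + κ * y ^ 2
    + (v - m - κ * (T - t) * y) * β * p₁ + σ * q₁
    + (γ * β / σ ^ 2) * (v - m) * β * p₂ + (γ * β / σ) * q₂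
    - (β ^ 2 * γ ^ 2 / σ ^ 2) * p₃

section

variable {𝕜 : Type*} [Field 𝕜] [LinearOrder 𝕜] [IsStrictOrderedRing 𝕜]

theorem convexOn_quadratic {a : 𝕜} (ha : 0 ≤ a) (b c : 𝕜) :
    ConvexOn 𝕜 Set.univ fun x : 𝕜 ↦ a * x ^ 2 + b * x + c :=
  (((even_two.convexOn_pow).smul ha).add
    ((b • LinearMap.id : 𝕜 →ₗ[𝕜] 𝕜).convexOn convex_univ)).add_const c

theorem ConvexOn.isMaxOn_Icc_left_or_right {β : Type*} [AddCommGroup β] [LinearOrder β]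
    [IsOrderedAddMonoid β] [Module 𝕜 β] [IsStrictOrderedModule 𝕜 β] {f : 𝕜 → β} {a b : 𝕜}
    (hf : ConvexOn 𝕜 (Set.Icc a b) f) (hab : a ≤ b) :
    IsMaxOn f (Set.Icc a b) a ∨ IsMaxOn f (Set.Icc a b) b := by
  have ha : a ∈ Set.Icc a b := Set.left_mem_Icc.2 hab
  have hb : b ∈ Set.Icc a b := Set.right_mem_Icc.2 hab
  rcases le_total (f b) (f a) with hba | hab'
  · exact .inl fun z hz ↦ (hf.le_max_of_mem_Icc ha hb hz).trans (max_le le_rfl hba)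
  · exact .inr fun z hz ↦ (hf.le_max_of_mem_Icc ha hb hz).trans (max_le hab' le_rfl)

end

theorem HM_eq_quadratic (t T y m v γ σ q₁ q₂ p₁ p₂ p₃ β : ℝ) :
    HM t T y m v γ σ q₁ q₂ p₁ p₂ p₃ β = fun κ ↦
      (T - t) ^ 2 * y ^ 2 * β * κ ^ 2
        + (y ^ 2 - (T - t) * y * β * (v - m + p₁)) * κ
        + ((v - m) * β * p₁ + σ * q₁ + (γ * β / σ ^ 2) * (v - m) * β * p₂
          + (γ * β / σ) * q₂ - (β ^ 2 * γ ^ 2 / σ ^ 2) * p₃) := by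
  funext κ
  simp only [HM]
  ring

theorem convexOn_HM (t T y m v γ σ q₁ q₂ p₁ p₂ p₃ : ℝ) {β : ℝ} (hβ : 0 ≤ β) :
    ConvexOn ℝ Set.univ (HM t T y m v γ σ q₁ q₂ p₁ p₂ p₃ β) := by
  rw [HM_eq_quadratic]
  exact convexOn_quadratic (by positivity) _ _

theorem market_maker_hamiltonian_convex_max_at_endpoints_general
    (t T y m v γ σ q₁ q₂ p₁ p₂ p₃ β : ℝ)
    (hβ : 0 ≤ β) :
    ConvexOn ℝ Set.univ (HM t T y m v γ σ q₁ q₂ p₁ p₂ p₃ β) ∧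
    ∀ K : ℝ, 0 ≤ K →
      IsMaxOn (HM t T y m v γ σ q₁ q₂ p₁ p₂ p₃ β) (Set.Icc 0 K) 0 ∨
      IsMaxOn (HM t T y m v γ σ q₁ q₂ p₁ p₂ p₃ β) (Set.Icc 0 K) K :=
  have hconv := convexOn_HM t T y m v γ σ q₁ q₂ p₁ p₂ p₃ hβ
  ⟨hconv, fun _ hK ↦
    (hconv.subset (Set.subset_univ _) (convex_Icc _ _)).isMaxOn_Icc_left_or_right hK⟩

/-- `H^M` is convex in `κ`, hence its maximum over `[0,K]` is
attained at `κ = 0` or at `κ = K`. -/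
theorem market_maker_hamiltonian_convex_max_at_endpoints
    (t T y m v γ σ q₁ q₂ p₁ p₂ p₃ β : ℝ)
    (htT : t < T) (hσ : 0 < σ) (hβ : 0 ≤ β) :
    ConvexOn ℝ Set.univ (HM t T y m v γ σ q₁ q₂ p₁ p₂ p₃ β) ∧
    ∀ K : ℝ, 0 ≤ K →
      IsMaxOn (HM t T y m v γ σ q₁ q₂ p₁ p₂ p₃ β) (Set.Icc 0 K) 0 ∨
      IsMaxOn (HM t T y m v γ σ q₁ q₂ p₁ p₂ p₃ β) (Set.Icc 0 K) K :=
  market_maker_hamiltonian_convex_max_at_endpoints_general t T y m v γ σ q₁ q₂ p₁ p₂ p₃ β hβ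
end
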